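/- Let p be a prime and let B : ℕ × ℕ → ℕ be any function satisfying, for every odd n ≥ 3 and every q: (i) if q ≠ p(n-1) then B(n,q) ≥ B(p(n-1)+1, q) + B(p(n-1)-1, q-1) + B(n-2, q-2), and (ii) if q = p(n-1) then B(n,q) ≥ 1 + B(n-2, q-2). Suppose there exist real numbers C > 0 and ν > 0 such that B(3, q) ≤ C·ν^{q-3} for all q ≥ 3. Then ν ≥ φ^{2/(4p+5)}, where φ = (1+√5)/2 is the golden ratio. -/
import Mathlib


/-- Any base `ν` for an exponential upper bound on a function `B` satisfying the EHP
inequalities of Lemma 2 is at least `φ^(2/(4p+5))`, where `φ = (1+√5)/2` is the golden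
ratio. -/
theorem goldenRatio_rpow_le_of_ehp_bound (p : ℕ) (hp : p.Prime) (B : ℕ × ℕ → ℕ)
    (hB1 : ∀ n q : ℕ, Odd n → 3 ≤ n → q ≠ p * (n - 1) →
      B (p * (n - 1) + 1, q) + B (p * (n - 1) - 1, q - 1) + B (n - 2, q - 2) ≤ B (n, q))
    (hB2 : ∀ n q : ℕ, Odd n → 3 ≤ n → q = p * (n - 1) →
      1 + B (n - 2, q - 2) ≤ B (n, q))
    (C ν : ℝ) (hC : 0 < C) (hν : 0 < ν)
    (hexp : ∀ q : ℕ, 3 ≤ q → (B (3, q) : ℝ) ≤ C * ν ^ (q - 3)) :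
    ((1 + Real.sqrt 5) / 2) ^ ((2 : ℝ) / (4 * (p : ℝ) + 5)) ≤ ν := by
  have hp2 : 2 ≤ p := hp.two_le
  -- descent: B (n, q) ≥ B (n-2, q-2)
  have hdesc : ∀ n q : ℕ, Odd n → 3 ≤ n → B (n - 2, q - 2) ≤ B (n, q) := by
    intro n q ho hn
    by_cases hq : q = p * (n - 1)
    · have := hB2 n q ho hn hq; omega
    · have := hB1 n q ho hn hq; omega
  have hdesc2 : ∀ k q : ℕ, B (3, q) ≤ B (3 + 2 * k, q + 2 * k) := by
    intro k
    induction k with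
    | zero => intro q; simp
    | succ k ih =>
      intro q
      have h1 := hdesc (3 + 2 * (k + 1)) (q + 2 * (k + 1)) ⟨k + 2, by ring⟩ (by omega)
      have e1 : 3 + 2 * (k + 1) - 2 = 3 + 2 * k := by omega
      have e2 : q + 2 * (k + 1) - 2 = q + 2 * k := by omega
      rw [e1, e2] at h1
      exact le_trans (ih q) h1
  -- the key recursion
  have hrec : ∀ q : ℕ, q ≠ 2 * p → 2 * p - 2 ≤ q →
      B (3, q - (2 * p - 2)) + B (3, q - (2 * p - 2) + 1) ≤ B (3, q) := by
    intro q hq hq2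
    have h0 := hB1 3 q ⟨1, by ring⟩ le_rfl (by omega)
    have h1 := hdesc2 (p - 1) (q - (2 * p - 2))
    have e1 : 3 + 2 * (p - 1) = p * (3 - 1) + 1 := by omega
    have e2 : q - (2 * p - 2) + 2 * (p - 1) = q := by omega
    rw [e1, e2] at h1
    have h2 := hdesc2 (p - 2) (q - (2 * p - 2) + 1)
    have e3 : 3 + 2 * (p - 2) = p * (3 - 1) - 1 := by omega
    have e4 : q - (2 * p - 2) + 1 + 2 * (p - 2) = q - 1 := by omega
    rw [e3, e4] at h2
    omega
  -- monotonicity steps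
  have hmonoa : ∀ q : ℕ, 2 * p ≤ q → B (3, q) ≤ B (3, q + (2 * p - 2)) := by
    intro q hq
    have h := hrec (q + (2 * p - 2)) (by omega) (by omega)
    have e : q + (2 * p - 2) - (2 * p - 2) = q := by omega
    rw [e] at h
    omega
  have hmonob : ∀ q : ℕ, 2 * p ≤ q → B (3, q) ≤ B (3, q + (2 * p - 3)) := by
    intro q hq
    have h := hrec (q + (2 * p - 3)) (by omega) (by omega)
    have e : q + (2 * p - 3) - (2 * p - 2) + 1 = q := by omega
    rw [e] at h
    omega
  -- positivity
  have hpos0 : 1 ≤ B (3, 2 * p) := by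
    have := hB2 3 (2 * p) ⟨1, by ring⟩ le_rfl (by omega)
    omega
  have hposy : ∀ y : ℕ, 1 ≤ B (3, 2 * p + y * (2 * p - 3)) := by
    intro y
    induction y with
    | zero => simpa using hpos0
    | succ y ih =>
      have h := hmonob (2 * p + y * (2 * p - 3)) (by omega)
      have e : 2 * p + y * (2 * p - 3) + (2 * p - 3) = 2 * p + (y + 1) * (2 * p - 3) := by ring
      rw [e] at h
      exact le_trans ih h
  have hposxy : ∀ x y : ℕ, 1 ≤ B (3, 2 * p + y * (2 * p - 3) + x * (2 * p - 2)) := by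
    intro x
    induction x with
    | zero => intro y; simpa using hposy y
    | succ x ih =>
      intro y
      have h := hmonoa (2 * p + y * (2 * p - 3) + x * (2 * p - 2)) (by omega)
      have e : 2 * p + y * (2 * p - 3) + x * (2 * p - 2) + (2 * p - 2)
          = 2 * p + y * (2 * p - 3) + (x + 1) * (2 * p - 2) := by ring
      rw [e] at h
      exact le_trans (ih y) h
  have hposall : ∀ q : ℕ, 2 * p + (2 * p - 3) * (2 * p - 3) ≤ q → 1 ≤ B (3, q) := by
    intro q hq
    have hb1 : 1 ≤ 2 * p - 3 := by omega
    have hn : 2 * p ≤ q := by nlinarith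
    set n := q - 2 * p with hndef
    have hnb : (2 * p - 3) * (2 * p - 3) ≤ n := by omega
    set r := n % (2 * p - 3) with hrdef
    set s := n / (2 * p - 3) with hsdef
    have hdm : (2 * p - 3) * s + r = n := Nat.div_add_mod n (2 * p - 3)
    have hrlt : r < 2 * p - 3 := Nat.mod_lt _ (by omega)
    have hbs : 2 * p - 3 ≤ s := by
      rw [hsdef]
      exact (Nat.le_div_iff_mul_le (by omega)).mpr hnb
    have hrs : r ≤ s := by omega
    obtain ⟨t, ht⟩ := Nat.exists_eq_add_of_le hrs
    have hc : 2 * p - 2 = (2 * p - 3) + 1 := by omega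
    have key : q = 2 * p + t * (2 * p - 3) + r * (2 * p - 2) := by
      rw [hc]
      rw [ht] at hdm
      have hq2p : q = 2 * p + n := by omega
      rw [hq2p, ← hdm]
      ring
    rw [key]
    exact hposxy r t
  -- real part
  set gr : ℝ := (1 + Real.sqrt 5) / 2 with hgrdef
  set μ : ℝ := gr ^ ((2 : ℝ) / (4 * (p : ℝ) + 5)) with hμdef
  have hs5 : 1 ≤ Real.sqrt 5 := by
    rw [show (1 : ℝ) = Real.sqrt 1 from (Real.sqrt_one).symm]
    exact Real.sqrt_le_sqrt (by norm_num)
  have hgr1 : 1 ≤ gr := by rw [hgrdef]; linarith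
  have hs53 : Real.sqrt 5 ≤ 3 := by
    nlinarith [Real.sq_sqrt (show (0 : ℝ) ≤ 5 by norm_num), Real.sqrt_nonneg 5]
  have hgr2 : gr ≤ 2 := by rw [hgrdef]; linarith
  have hden : (0 : ℝ) < 4 * (p : ℝ) + 5 := by positivity
  have hμ1 : 1 ≤ μ := by
    rw [hμdef, show (1 : ℝ) = gr ^ (0 : ℝ) from (Real.rpow_zero gr).symm]
    exact Real.rpow_le_rpow_of_exponent_le hgr1 (by positivity)
  have hμpos : 0 < μ := lt_of_lt_of_le one_pos hμ1
  have hpR : (2 : ℝ) ≤ (p : ℝ) := by exact_mod_cast hp2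
  have hkey : μ ^ (2 * p - 2) ≤ 1 + μ := by
    have hcast : ((2 * p - 2 : ℕ) : ℝ) = 2 * (p : ℝ) - 2 := by
      rw [Nat.cast_sub (by omega)]; push_cast; ring
    have h1 : μ ^ (2 * p - 2) = gr ^ ((2 : ℝ) / (4 * (p : ℝ) + 5) * ((2 * p - 2 : ℕ) : ℝ)) := by
      rw [hμdef, ← Real.rpow_natCast (gr ^ ((2 : ℝ) / (4 * (p : ℝ) + 5))) (2 * p - 2),
        ← Real.rpow_mul (by linarith)]
    have h2 : (2 : ℝ) / (4 * (p : ℝ) + 5) * ((2 * p - 2 : ℕ) : ℝ) ≤ 1 := by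
      rw [hcast, div_mul_eq_mul_div, div_le_one hden]
      linarith
    calc μ ^ (2 * p - 2) = gr ^ ((2 : ℝ) / (4 * (p : ℝ) + 5) * ((2 * p - 2 : ℕ) : ℝ)) := h1
      _ ≤ gr ^ (1 : ℝ) := Real.rpow_le_rpow_of_exponent_le hgr1 h2
      _ = gr := Real.rpow_one gr
      _ ≤ 2 := hgr2
      _ ≤ 1 + μ := by linarith
  set Q : ℕ := 2 * p + (2 * p - 3) * (2 * p - 3) with hQdef
  have hQgt : 2 * p < Q := by
    have : 0 < (2 * p - 3) * (2 * p - 3) := Nat.mul_pos (by omega) (by omega)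
    omega
  set K : ℕ := Q + (2 * p - 3) with hKdef
  have hmain : ∀ q : ℕ, Q ≤ q → μ ^ q ≤ μ ^ K * (B (3, q) : ℝ) := by
    intro q
    induction q using Nat.strong_induction_on with
    | _ q ih =>
      intro hq
      by_cases hsmall : q ≤ K
      · have hb : (1 : ℝ) ≤ (B (3, q) : ℝ) := by exact_mod_cast hposall q hq
        calc μ ^ q ≤ μ ^ K := pow_le_pow_right₀ hμ1 hsmall
          _ = μ ^ K * 1 := by ring
          _ ≤ μ ^ K * (B (3, q) : ℝ) :=
            mul_le_mul_of_nonneg_left hb (pow_nonneg hμpos.le _)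
      · push_neg at hsmall
        have hrec' := hrec q (by omega) (by omega)
        have ih1 := ih (q - (2 * p - 2)) (by omega) (by omega)
        have ih2 := ih (q - (2 * p - 2) + 1) (by omega) (by omega)
        have hsum : (B (3, q - (2 * p - 2)) : ℝ) + (B (3, q - (2 * p - 2) + 1) : ℝ)
            ≤ (B (3, q) : ℝ) := by exact_mod_cast hrec'
        have hpow : μ ^ q = μ ^ (q - (2 * p - 2)) * μ ^ (2 * p - 2) := by
          rw [← pow_add]; congr 1; omega
        have hpow2 : μ ^ (q - (2 * p - 2) + 1) = μ ^ (q - (2 * p - 2)) * μ := pow_succ _ _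
        calc μ ^ q = μ ^ (q - (2 * p - 2)) * μ ^ (2 * p - 2) := hpow
          _ ≤ μ ^ (q - (2 * p - 2)) * (1 + μ) :=
            mul_le_mul_of_nonneg_left hkey (pow_nonneg hμpos.le _)
          _ = μ ^ (q - (2 * p - 2)) + μ ^ (q - (2 * p - 2) + 1) := by rw [hpow2]; ring
          _ ≤ μ ^ K * (B (3, q - (2 * p - 2)) : ℝ) + μ ^ K * (B (3, q - (2 * p - 2) + 1) : ℝ) :=
            add_le_add ih1 ih2
          _ = μ ^ K * ((B (3, q - (2 * p - 2)) : ℝ) + (B (3, q - (2 * p - 2) + 1) : ℝ)) := by ring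
          _ ≤ μ ^ K * (B (3, q) : ℝ) :=
            mul_le_mul_of_nonneg_left hsum (pow_nonneg hμpos.le _)
  by_contra hcon
  push_neg at hcon
  have hr : 1 < μ / ν := (one_lt_div hν).mpr hcon
  obtain ⟨N, hN⟩ := pow_unbounded_of_one_lt (μ ^ K * C / ν ^ 3) hr
  set q := max N (max Q 3) with hqdef
  have hq3 : 3 ≤ q := le_trans (le_max_right Q 3) (le_max_right _ _)
  have hqQ : Q ≤ q := le_trans (le_max_left Q 3) (le_max_right _ _)
  have h1 := hmain q hqQ
  have h2 := hexp q hq3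
  have hν3 : ν ^ (q - 3) = ν ^ q / ν ^ 3 := by
    rw [eq_div_iff (by positivity), ← pow_add]
    congr 1; omega
  have hchain : μ ^ q ≤ μ ^ K * C * ν ^ q / ν ^ 3 := by
    calc μ ^ q ≤ μ ^ K * (B (3, q) : ℝ) := h1
      _ ≤ μ ^ K * (C * ν ^ (q - 3)) :=
        mul_le_mul_of_nonneg_left h2 (pow_nonneg hμpos.le _)
      _ = μ ^ K * C * ν ^ q / ν ^ 3 := by rw [hν3]; ring
  have hfin : (μ / ν) ^ q ≤ μ ^ K * C / ν ^ 3 := by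
    rw [div_pow, div_le_iff₀ (pow_pos hν q)]
    calc μ ^ q ≤ μ ^ K * C * ν ^ q / ν ^ 3 := hchain
      _ = μ ^ K * C / ν ^ 3 * ν ^ q := by ring
  have hNq : (μ / ν) ^ N ≤ (μ / ν) ^ q := pow_le_pow_right₀ hr.le (le_max_left _ _)
  linarith
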